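/- Let X be n-Hausdorff and n-σX = (n-κX)^# the Fomin-type extension of X. Then: the subspace n-σX ∖ X has a basis of clopen sets (is zero-dimensional); every subset K ⊆ n-σX ∖ X that is closed in n-σX is compact; and every closed nowhere dense subset A of X is closed in n-σX. -/

import Mathlib

open Set Topology Function

universe u v

/-- A space is `n`-Hausdorff if any `n` distinct points admit open neighborhoods
with empty intersection. -/
def NHausdorff (X : Type u) [TopologicalSpace X] (n : ℕ) : Prop :=
  ∀ x : Fin n → X, Function.Injective x →
    ∃ U : Fin n → Set X, (∀ i, IsOpen (U i) ∧ x i ∈ U i) ∧ (⋂ i, U i) = (∅ : Set X)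

/-- An open filter on `X`: a nonempty family of nonempty open sets closed under
finite intersections and open supersets. -/
structure IsOpenFilter {X : Type u} [TopologicalSpace X] (F : Set (Set X)) : Prop where
  nonempty : F.Nonempty
  isOpen_mem : ∀ U ∈ F, IsOpen U
  nonempty_mem : ∀ U ∈ F, U.Nonempty
  inter_mem : ∀ U ∈ F, ∀ V ∈ F, U ∩ V ∈ F
  superset_mem : ∀ U ∈ F, ∀ V : Set X, IsOpen V → U ⊆ V → V ∈ F

/-- An open ultrafilter: a maximal open filter. -/
def IsOpenUltrafilter {X : Type u} [TopologicalSpace X] (F : Set (Set X)) : Prop :=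
  IsOpenFilter F ∧ ∀ G : Set (Set X), IsOpenFilter G → F ⊆ G → G = F

/-- The adherence of a family of sets: `⋂ {cl U : U ∈ F}`. -/
def adh {X : Type u} [TopologicalSpace X] (F : Set (Set X)) : Set X :=
  ⋂ U ∈ F, closure U

lemma univ_mem_of_isOpenFilter {X : Type u} [TopologicalSpace X] {F : Set (Set X)}
    (hF : IsOpenFilter F) : Set.univ ∈ F := by
  obtain ⟨U, hU⟩ := hF.nonempty
  exact hF.superset_mem U hU Set.univ isOpen_univ (Set.subset_univ U)

/-- The non-full open ultrafilters on `X`: those with fewer than `n-1` adherent points. -/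
def NonFullUlt (X : Type u) [TopologicalSpace X] (n : ℕ) : Type u :=
  {F : Set (Set X) // IsOpenUltrafilter F ∧ (adh F).encard < (n - 1 : ℕ)}

/-- The points added to `X` to form `n-κX`: for each non-full open ultrafilter `U`,
a set of `n - 1 - |aU|` new points. -/
def KPoints (X : Type u) [TopologicalSpace X] (n : ℕ) : Type u :=
  Σ F : NonFullUlt X n, Fin (n - 1 - (adh F.val).ncard)

/-- The underlying set of the Katětov-type extension `n-κX`. -/
def nKatetov (X : Type u) [TopologicalSpace X] (n : ℕ) : Type u :=
  X ⊕ KPoints X n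

/-- The topology of `n-κX`: `V` is open iff `V ∩ X` is open in `X` and each added point
`p` (associated to the ultrafilter `p.1`) in `V` satisfies `V ∩ X ∈ p.1`. -/
def nKatetovTop (X : Type u) [TopologicalSpace X] (n : ℕ) :
    TopologicalSpace (nKatetov X n) where
  IsOpen V := IsOpen (Sum.inl ⁻¹' V : Set X) ∧
    ∀ p : KPoints X n, Sum.inr p ∈ V → Sum.inl ⁻¹' V ∈ p.1.val
  isOpen_univ := by
    refine ⟨by exact isOpen_univ, fun p _ => ?_⟩
    exact univ_mem_of_isOpenFilter p.1.property.1.1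
  isOpen_inter := by
    rintro s t ⟨hs1, hs2⟩ ⟨ht1, ht2⟩
    refine ⟨by exact hs1.inter ht1, fun p hp => ?_⟩
    exact p.1.property.1.1.inter_mem _ (hs2 p hp.1) _ (ht2 p hp.2)
  isOpen_sUnion := by
    intro S hS
    have hop : IsOpen (Sum.inl ⁻¹' ⋃₀ S : Set X) := by
      rw [show (Sum.inl ⁻¹' ⋃₀ S : Set X) = ⋃ s ∈ S, (Sum.inl ⁻¹' s : Set X) from
        Set.preimage_sUnion]
      exact isOpen_biUnion fun s hs => (hS s hs).1
    refine ⟨hop, ?_⟩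
    rintro p ⟨s, hsS, hps⟩
    exact p.1.property.1.1.superset_mem _ ((hS s hsS).2 p hps) _ hop
      (fun x hx => ⟨s, hsS, hx⟩)

/-- For `U` open in `Y`, the set `o(U ∩ X) = {p ∈ Y : U ∩ X ∈ O^p}`, where
`O^p = {V ∩ X : p ∈ V ∈ τ(Y)}`. -/
def oSet {Y : Type u} [TopologicalSpace Y] (X : Set Y) (U : Set Y) : Set Y :=
  {p | ∃ V : Set Y, IsOpen V ∧ p ∈ V ∧ V ∩ X = U ∩ X}

/-- The strict extension topology on `Y` (relative to the dense subset `X`),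
with base `{oU : U open in X}`. -/
def strictTop (Y : Type u) [TopologicalSpace Y] (X : Set Y) : TopologicalSpace Y :=
  TopologicalSpace.generateFrom {S | ∃ U : Set Y, IsOpen U ∧ S = oSet X U}

/-- The simple extension topology on `Y` (relative to the dense subset `X`),
generated by the sets `{p} ∪ U` for `U ∈ O^p`. -/
def simpleTop (Y : Type u) [TopologicalSpace Y] (X : Set Y) : TopologicalSpace Y :=
  TopologicalSpace.generateFrom
    {S | ∃ (p : Y) (V : Set Y), IsOpen V ∧ p ∈ V ∧ S = insert p (V ∩ X)}

/-!
The sets `oW`, `W` open in `X`, form a base of `n-σX`, and an added point lies in `oW` iff `W`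
belongs to its open ultrafilter. An open ultrafilter contains `W` iff it does not contain
`X ∖ cl W`, so on the remainder `oW` and `o(X ∖ cl W)` are complementary basic open sets. A
closed nowhere dense `A` has dense open complement, which belongs to every open ultrafilter, so
the complement of `A` in `n-σX` is the open set `o(X ∖ A)`.

For compactness of a closed `K` inside the remainder, fix an open cover of `K` without finite
subcover. The open `W` with `K ∩ oW` finitely covered form an ideal containing no dense set, and
every point of `n-κX` lies in `oW` for some such `W`. The sets `X ∖ cl W` generate an open
filter; an open ultrafilter extending it avoids the ideal and, since the ideal covers `X`, has
empty adherence. As `n ≥ 2` it carries an added point, which lies in no such `oW`.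
-/

section OpenUltrafilter

variable {X : Type u} [TopologicalSpace X] {F : Set (Set X)} {W W₁ W₂ : Set X}

lemma IsOpenFilter.notMem_of_disjoint (hF : IsOpenFilter F) {V : Set X} (hV : V ∈ F)
    (hd : Disjoint W V) : W ∉ F := fun hW =>
  (hF.nonempty_mem _ (hF.inter_mem W hW V hV)).ne_empty hd.inter_eq

lemma IsOpenFilter.inter_mem_iff (hF : IsOpenFilter F) (h₁ : IsOpen W₁) (h₂ : IsOpen W₂) :
    W₁ ∩ W₂ ∈ F ↔ W₁ ∈ F ∧ W₂ ∈ F :=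
  ⟨fun h => ⟨hF.superset_mem _ h _ h₁ inter_subset_left,
      hF.superset_mem _ h _ h₂ inter_subset_right⟩,
    fun h => hF.inter_mem _ h.1 _ h.2⟩

lemma IsOpenFilter.exists_isOpenUltrafilter_superset (hF : IsOpenFilter F) :
    ∃ G, F ⊆ G ∧ IsOpenUltrafilter G := by
  have hchains : ∀ c ⊆ {G : Set (Set X) | IsOpenFilter G}, IsChain (· ⊆ ·) c → c.Nonempty →
      ∃ ub ∈ {G : Set (Set X) | IsOpenFilter G}, ∀ G ∈ c, G ⊆ ub := by
    intro c hc hchain ⟨G₀, hG₀⟩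
    refine ⟨⋃₀ c, ⟨?_, ?_, ?_, ?_, ?_⟩, fun G hG => subset_sUnion_of_mem hG⟩
    · obtain ⟨U, hU⟩ := (hc hG₀).nonempty
      exact ⟨U, G₀, hG₀, hU⟩
    · rintro U ⟨G, hG, hU⟩
      exact (hc hG).isOpen_mem U hU
    · rintro U ⟨G, hG, hU⟩
      exact (hc hG).nonempty_mem U hU
    · rintro U ⟨G, hG, hU⟩ V ⟨G', hG', hV⟩
      rcases hchain.total hG hG' with h | h
      · exact ⟨G', hG', (hc hG').inter_mem U (h hU) V hV⟩
      · exact ⟨G, hG, (hc hG).inter_mem U hU V (h hV)⟩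
    · rintro U ⟨G, hG, hU⟩ V hV hUV
      exact ⟨G, hG, (hc hG).superset_mem U hU V hV hUV⟩
  obtain ⟨G, hFG, hG⟩ := zorn_subset_nonempty _ hchains F hF
  exact ⟨G, hFG, hG.1, fun G' hG' hGG' => (hG.2 hG' hGG').antisymm hGG'⟩

lemma IsOpenUltrafilter.mem_of_forall_inter_nonempty (hF : IsOpenUltrafilter F)
    (hW : IsOpen W) (h : ∀ V ∈ F, (V ∩ W).Nonempty) : W ∈ F := by
  let G : Set (Set X) := {U | IsOpen U ∧ ∃ V ∈ F, V ∩ W ⊆ U}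
  have hFG : F ⊆ G := fun V hV => ⟨hF.1.isOpen_mem V hV, V, hV, inter_subset_left⟩
  have hG : IsOpenFilter G :=
    { nonempty := hF.1.nonempty.mono hFG
      isOpen_mem := fun U hU => hU.1
      nonempty_mem := fun U ⟨_, V, hV, hVU⟩ => (h V hV).mono hVU
      inter_mem := fun U ⟨hU, V, hV, hVU⟩ U' ⟨hU', V', hV', hVU'⟩ =>
        ⟨hU.inter hU', V ∩ V', hF.1.inter_mem V hV V' hV',
          fun x ⟨⟨hx, hx'⟩, hxW⟩ => ⟨hVU ⟨hx, hxW⟩, hVU' ⟨hx', hxW⟩⟩⟩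
      superset_mem := fun U ⟨_, V, hV, hVU⟩ U' hU' hUU' => ⟨hU', V, hV, hVU.trans hUU'⟩ }
  obtain ⟨V, hV⟩ := hF.1.nonempty
  exact hF.2 G hG hFG ▸ ⟨hW, V, hV, inter_subset_right⟩

lemma IsOpenUltrafilter.exists_disjoint_of_notMem (hF : IsOpenUltrafilter F) (hW : IsOpen W)
    (h : W ∉ F) : ∃ V ∈ F, Disjoint W V := by
  by_contra! hc
  exact h (hF.mem_of_forall_inter_nonempty hW fun V hV =>
    not_disjoint_iff_nonempty_inter.1 fun hd => hc V hV hd.symm)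

lemma IsOpenUltrafilter.compl_closure_mem_iff (hF : IsOpenUltrafilter F) (hW : IsOpen W) :
    (closure W)ᶜ ∈ F ↔ W ∉ F := by
  refine ⟨fun h => hF.1.notMem_of_disjoint h (disjoint_compl_right_iff_subset.2 subset_closure),
    fun h => ?_⟩
  obtain ⟨V, hV, hWV⟩ := hF.exists_disjoint_of_notMem hW h
  exact hF.1.superset_mem V hV _ isClosed_closure.isOpen_compl
    (hWV.closure_left (hF.1.isOpen_mem V hV)).subset_compl_left

lemma IsOpenUltrafilter.union_mem_iff (hF : IsOpenUltrafilter F) (h₁ : IsOpen W₁)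
    (h₂ : IsOpen W₂) : W₁ ∪ W₂ ∈ F ↔ W₁ ∈ F ∨ W₂ ∈ F := by
  refine ⟨fun h => ?_, ?_⟩
  · by_contra! hW
    rw [← hF.compl_closure_mem_iff h₁, ← hF.compl_closure_mem_iff h₂] at hW
    refine hF.1.notMem_of_disjoint (hF.1.inter_mem _ hW.1 _ hW.2) ?_ h
    rw [← compl_union, ← closure_union]
    exact disjoint_compl_right_iff_subset.2 subset_closure
  · rintro (h | h)
    exacts [hF.1.superset_mem _ h _ (h₁.union h₂) subset_union_left,
      hF.1.superset_mem _ h _ (h₁.union h₂) subset_union_right]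

lemma IsOpenUltrafilter.mem_of_dense (hF : IsOpenUltrafilter F) (hW : IsOpen W) (hd : Dense W) :
    W ∈ F :=
  hF.mem_of_forall_inter_nonempty hW fun V hV =>
    hd.inter_open_nonempty V (hF.1.isOpen_mem V hV) (hF.1.nonempty_mem V hV)

lemma IsOpenUltrafilter.mem_of_mem_adh (hF : IsOpenUltrafilter F) {x : X} (hx : x ∈ adh F)
    (hW : IsOpen W) (hxW : x ∈ W) : W ∈ F :=
  hF.mem_of_forall_inter_nonempty hW fun V hV => by
    rw [inter_comm]
    exact mem_closure_iff.1 (mem_iInter₂.1 hx V hV) W hW hxW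

lemma exists_isOpenUltrafilter_adh_eq_empty {𝒲 : Set (Set X)} (hopen : ∀ W ∈ 𝒲, IsOpen W)
    (hempty : ∅ ∈ 𝒲) (hunion : ∀ W₁ ∈ 𝒲, ∀ W₂ ∈ 𝒲, W₁ ∪ W₂ ∈ 𝒲)
    (hdense : ∀ W ∈ 𝒲, ¬Dense W) (hcover : ⋃₀ 𝒲 = univ) :
    ∃ F, IsOpenUltrafilter F ∧ adh F = ∅ ∧ ∀ W ∈ 𝒲, W ∉ F := by
  let F₀ : Set (Set X) := {G | IsOpen G ∧ ∃ W ∈ 𝒲, (closure W)ᶜ ⊆ G}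
  have hF₀ : IsOpenFilter F₀ :=
    { nonempty := ⟨univ, isOpen_univ, ∅, hempty, subset_univ _⟩
      isOpen_mem := fun G hG => hG.1
      nonempty_mem := fun G ⟨_, W, hW, hWG⟩ =>
        (nonempty_compl.2 fun h => hdense W hW (dense_iff_closure_eq.2 h)).mono hWG
      inter_mem := fun G ⟨hG, W, hW, hWG⟩ G' ⟨hG', W', hW', hWG'⟩ =>
        ⟨hG.inter hG', W ∪ W', hunion W hW W' hW', by
          rw [closure_union, compl_union]
          exact inter_subset_inter hWG hWG'⟩
      superset_mem := fun G ⟨_, W, hW, hWG⟩ G' hG' hGG' => ⟨hG', W, hW, hWG.trans hGG'⟩ }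
  obtain ⟨F, hF₀F, hF⟩ := hF₀.exists_isOpenUltrafilter_superset
  have hnotMem : ∀ W ∈ 𝒲, W ∉ F := fun W hW =>
    (hF.compl_closure_mem_iff (hopen W hW)).1
      (hF₀F ⟨isClosed_closure.isOpen_compl, W, hW, subset_rfl⟩)
  refine ⟨F, hF, eq_empty_iff_forall_notMem.2 fun x hx => ?_, hnotMem⟩
  obtain ⟨W, hW, hxW⟩ := mem_sUnion.1 (hcover ▸ mem_univ x)
  exact hnotMem W hW (hF.mem_of_mem_adh hx (hopen W hW) hxW)

lemma exists_kPoints_of_adh_eq_empty {n : ℕ} (hn : 2 ≤ n) (hF : IsOpenUltrafilter F)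
    (h : adh F = ∅) : ∃ p : KPoints X n, p.1.val = F :=
  ⟨⟨⟨F, hF, by rw [h, encard_empty]; exact_mod_cast (by omega : 0 < n - 1)⟩,
    ⟨0, by rw [h, ncard_empty]; omega⟩⟩, rfl⟩

end OpenUltrafilter

lemma oSet_congr {Y : Type u} [TopologicalSpace Y] {A U U' : Set Y} (h : U ∩ A = U' ∩ A) :
    oSet A U = oSet A U' := by
  simp only [oSet, h]

namespace nKatetov

variable {X : Type u} [TopologicalSpace X] {n : ℕ} {W W₁ W₂ : Set X}

/-- The topology of `n-σX = (n-κX)^#`. -/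
abbrev sigmaTop (X : Type u) [TopologicalSpace X] (n : ℕ) : TopologicalSpace (nKatetov X n) :=
  @strictTop _ (nKatetovTop X n) (range Sum.inl)

attribute [local instance] sigmaTop

/-- The set `oW` of the paper, for `W` open in `X`. -/
def basicOpen (n : ℕ) (W : Set X) : Set (nKatetov X n) :=
  @oSet _ (nKatetovTop X n) (range Sum.inl) (Sum.inl '' W)

lemma isOpen_inl_image (hW : IsOpen W) : IsOpen[nKatetovTop X n] (Sum.inl '' W) :=
  ⟨(congrArg IsOpen (Sum.inl_injective.preimage_image W)).mpr hW,
    fun _ ⟨_, _, h⟩ => (Sum.inl_ne_inr h).elim⟩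

lemma isOpen_insert_inr (hW : IsOpen W) {p : KPoints X n} (hp : W ∈ p.1.val) :
    IsOpen[nKatetovTop X n] (insert (Sum.inr p) (Sum.inl '' W)) := by
  have hpre : Sum.inl ⁻¹' insert (Sum.inr p) (Sum.inl '' W) = W := by
    ext x
    simp [Sum.inl_injective.mem_set_image]
  refine ⟨(congrArg IsOpen hpre).mpr hW, fun q hq => (congrArg (· ∈ q.1.val) hpre).mpr ?_⟩
  rcases hq with h | ⟨_, _, h⟩
  · cases Sum.inr_injective h
    exact hp
  · exact (Sum.inl_ne_inr h).elim

lemma preimage_inl_eq_of_inter_range_eq {V : Set (nKatetov X n)}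
    (h : V ∩ range Sum.inl = Sum.inl '' W ∩ range Sum.inl) : Sum.inl ⁻¹' V = W :=
  preimage_inter_range.symm.trans <| (congrArg (Sum.inl ⁻¹' ·) h).trans <|
    preimage_inter_range.trans (Sum.inl_injective.preimage_image W)

lemma inl_mem_basicOpen (hW : IsOpen W) {x : X} :
    (Sum.inl x : nKatetov X n) ∈ basicOpen n W ↔ x ∈ W := by
  constructor
  · rintro ⟨V, -, hxV, hVW⟩
    exact (congrArg (x ∈ ·) (preimage_inl_eq_of_inter_range_eq hVW)).mp hxV
  · intro hx
    exact ⟨_, isOpen_inl_image hW, mem_image_of_mem _ hx, rfl⟩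

lemma inr_mem_basicOpen (hW : IsOpen W) {p : KPoints X n} :
    (Sum.inr p : nKatetov X n) ∈ basicOpen n W ↔ W ∈ p.1.val := by
  constructor
  · rintro ⟨V, hV, hpV, hVW⟩
    exact (congrArg (· ∈ p.1.val) (preimage_inl_eq_of_inter_range_eq hVW)).mp (hV.2 p hpV)
  · intro hp
    refine ⟨_, isOpen_insert_inr hW hp, mem_insert _ _, ?_⟩
    exact insert_inter_of_notMem fun ⟨_, h⟩ => Sum.inl_ne_inr h

lemma basicOpen_empty : basicOpen n (∅ : Set X) = ∅ :=
  eq_empty_iff_forall_notMem.2 fun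
    | .inl _, h => (inl_mem_basicOpen isOpen_empty).1 h
    | .inr p, h => (p.1.2.1.1.nonempty_mem _ ((inr_mem_basicOpen isOpen_empty).1 h)).ne_empty rfl

lemma basicOpen_univ : basicOpen n (univ : Set X) = univ :=
  eq_univ_of_forall fun
    | .inl _ => (inl_mem_basicOpen isOpen_univ).2 (mem_univ _)
    | .inr p => (inr_mem_basicOpen isOpen_univ).2 (univ_mem_of_isOpenFilter p.1.2.1.1)

lemma basicOpen_inter (h₁ : IsOpen W₁) (h₂ : IsOpen W₂) :
    basicOpen n (W₁ ∩ W₂) = basicOpen n W₁ ∩ basicOpen n W₂ := by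
  ext (x | p)
  · exact (inl_mem_basicOpen (h₁.inter h₂)).trans
      (and_congr (inl_mem_basicOpen h₁) (inl_mem_basicOpen h₂)).symm
  · exact (inr_mem_basicOpen (h₁.inter h₂)).trans <| (p.1.2.1.1.inter_mem_iff h₁ h₂).trans
      (and_congr (inr_mem_basicOpen h₁) (inr_mem_basicOpen h₂)).symm

lemma basicOpen_union (h₁ : IsOpen W₁) (h₂ : IsOpen W₂) :
    basicOpen n (W₁ ∪ W₂) = basicOpen n W₁ ∪ basicOpen n W₂ := by
  ext (x | p)
  · exact (inl_mem_basicOpen (h₁.union h₂)).trans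
      (or_congr (inl_mem_basicOpen h₁) (inl_mem_basicOpen h₂)).symm
  · exact (inr_mem_basicOpen (h₁.union h₂)).trans <| (p.1.2.1.union_mem_iff h₁ h₂).trans
      (or_congr (inr_mem_basicOpen h₁) (inr_mem_basicOpen h₂)).symm

lemma remainder_subset_basicOpen (hW : IsOpen W) (hd : Dense W) :
    (range (Sum.inl : X → nKatetov X n))ᶜ ⊆ basicOpen n W
  | .inl x, hx => (hx ⟨x, rfl⟩).elim
  | .inr p, _ => (inr_mem_basicOpen hW).2 (p.1.2.1.mem_of_dense hW hd)

lemma inr_mem_basicOpen_compl_closure (hW : IsOpen W) {p : KPoints X n} :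
    (Sum.inr p : nKatetov X n) ∈ basicOpen n (closure W)ᶜ ↔ Sum.inr p ∉ basicOpen n W :=
  (inr_mem_basicOpen isClosed_closure.isOpen_compl).trans <|
    (p.1.2.1.compl_closure_mem_iff hW).trans (not_congr (inr_mem_basicOpen hW)).symm

lemma oSet_eq_basicOpen (U : Set (nKatetov X n)) :
    @oSet _ (nKatetovTop X n) (range Sum.inl) U = basicOpen n (Sum.inl ⁻¹' U) :=
  @oSet_congr _ (nKatetovTop X n) _ _ _ <|
    image_preimage_eq_inter_range.symm.trans (inter_eq_left.2 (image_subset_range _ _)).symm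

lemma isTopologicalBasis_basicOpen :
    TopologicalSpace.IsTopologicalBasis (basicOpen n '' {W : Set X | IsOpen W}) := by
  refine ⟨?_, ?_, ?_⟩
  · rintro _ ⟨W₁, h₁, rfl⟩ _ ⟨W₂, h₂, rfl⟩ y hy
    rw [← basicOpen_inter h₁ h₂] at hy ⊢
    exact ⟨_, mem_image_of_mem _ (h₁.inter h₂), hy, subset_rfl⟩
  · exact sUnion_eq_univ_iff.2 fun y =>
      ⟨_, mem_image_of_mem _ isOpen_univ, basicOpen_univ (X := X) ▸ mem_univ y⟩
  · refine congrArg TopologicalSpace.generateFrom (Set.ext fun T => ⟨?_, ?_⟩)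
    · rintro ⟨U, hU, rfl⟩
      exact ⟨_, hU.1, (oSet_eq_basicOpen U).symm⟩
    · rintro ⟨W, hW, rfl⟩
      exact ⟨_, isOpen_inl_image hW, rfl⟩

lemma isOpen_basicOpen (hW : IsOpen W) : IsOpen (basicOpen n W) :=
  isTopologicalBasis_basicOpen.isOpen (mem_image_of_mem _ hW)

lemma exists_basicOpen_subset {T : Set (nKatetov X n)} (hT : IsOpen T) {y : nKatetov X n}
    (hy : y ∈ T) : ∃ W, IsOpen W ∧ y ∈ basicOpen n W ∧ basicOpen n W ⊆ T := by
  obtain ⟨_, ⟨W, hW, rfl⟩, hyW, hWT⟩ :=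
    isTopologicalBasis_basicOpen.exists_subset_of_mem_open hy hT
  exact ⟨W, hW, hyW, hWT⟩

lemma isClopen_preimage_val_basicOpen (hW : IsOpen W) :
    IsClopen (Subtype.val ⁻¹' basicOpen n W : Set ↥(range Sum.inl : Set (nKatetov X n))ᶜ) := by
  have hcompl : (Subtype.val ⁻¹' basicOpen n W : Set ↥(range Sum.inl : Set (nKatetov X n))ᶜ)ᶜ =
      Subtype.val ⁻¹' basicOpen n (closure W)ᶜ := by
    ext ⟨y, hy⟩
    cases y with
    | inl x => exact (hy ⟨x, rfl⟩).elim
    | inr p => exact (inr_mem_basicOpen_compl_closure hW).symm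
  refine ⟨⟨?_⟩, isOpen_induced (isOpen_basicOpen hW)⟩
  exact (congrArg IsOpen hcompl).mpr
    (isOpen_induced (isOpen_basicOpen isClosed_closure.isOpen_compl))

lemma isClosed_inl_image {A : Set X} (hA : IsClosed A) (hAi : interior A = ∅) :
    IsClosed[sigmaTop X n] (Sum.inl '' A) := by
  have hAc : basicOpen n Aᶜ = (Sum.inl '' A)ᶜ := by
    ext (x | p)
    · exact (inl_mem_basicOpen hA.isOpen_compl).trans
        (not_congr Sum.inl_injective.mem_set_image).symm
    · exact iff_of_true
        (remainder_subset_basicOpen hA.isOpen_compl (interior_eq_empty_iff_dense_compl.1 hAi)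
          fun ⟨_, h⟩ => Sum.inl_ne_inr h)
        (fun ⟨_, _, h⟩ => Sum.inl_ne_inr h)
  exact ⟨(congrArg IsOpen hAc).mp (isOpen_basicOpen hA.isOpen_compl)⟩

theorem isCompact_of_isClosed_subset_remainder (hn : 2 ≤ n) {K : Set (nKatetov X n)}
    (hKX : K ⊆ (range Sum.inl)ᶜ) (hK : IsClosed K) : IsCompact K := by
  classical
  refine isCompact_of_finite_subcover fun {ι} U hU hKU => ?_
  by_contra! hfin
  let 𝒲 : Set (Set X) := {W | IsOpen W ∧ ∃ t : Finset ι, K ∩ basicOpen n W ⊆ ⋃ i ∈ t, U i}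
  have hlocal : ∀ y, ∃ W ∈ 𝒲, y ∈ basicOpen n W := by
    intro y
    by_cases hy : y ∈ K
    · obtain ⟨i, hi⟩ := mem_iUnion.1 (hKU hy)
      obtain ⟨W, hW, hyW, hWU⟩ := exists_basicOpen_subset (hU i) hi
      exact ⟨W, ⟨hW, {i}, fun z hz => by simpa using hWU hz.2⟩, hyW⟩
    · obtain ⟨W, hW, hyW, hWK⟩ := exists_basicOpen_subset hK.isOpen_compl hy
      exact ⟨W, ⟨hW, ∅, fun z hz => (hWK hz.2 hz.1).elim⟩, hyW⟩
  obtain ⟨F, hF, hadh, hnotMem⟩ := exists_isOpenUltrafilter_adh_eq_empty (𝒲 := 𝒲)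
    (fun W hW => hW.1) ⟨isOpen_empty, ∅, fun z hz => (basicOpen_empty.subset hz.2).elim⟩
    (fun W₁ ⟨h₁, t₁, ht₁⟩ W₂ ⟨h₂, t₂, ht₂⟩ => ⟨h₁.union h₂, t₁ ∪ t₂, by
      rw [basicOpen_union h₁ h₂, inter_union_distrib_left, Finset.set_biUnion_union]
      exact union_subset_union ht₁ ht₂⟩)
    (fun W ⟨hW, t, ht⟩ hd =>
      hfin t ((subset_inter subset_rfl (hKX.trans (remainder_subset_basicOpen hW hd))).trans ht))
    (sUnion_eq_univ_iff.2 fun x =>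
      let ⟨W, hW, hxW⟩ := hlocal (Sum.inl x)
      ⟨W, hW, (inl_mem_basicOpen hW.1).1 hxW⟩)
  obtain ⟨p, rfl⟩ := exists_kPoints_of_adh_eq_empty hn hF hadh
  obtain ⟨W, hW, hpW⟩ := hlocal (Sum.inr p)
  exact hnotMem W hW ((inr_mem_basicOpen hW.1).1 hpW)

end nKatetov

theorem stmt18_general {X : Type u} [TopologicalSpace X] (n : ℕ) (hn : 2 ≤ n) :
    let σ : TopologicalSpace (nKatetov X n) :=
      @strictTop (nKatetov X n) (nKatetovTop X n) (Set.range Sum.inl)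
    let S : Set (nKatetov X n) := (Set.range (Sum.inl : X → nKatetov X n))ᶜ
    let τ : TopologicalSpace ↥S := σ.induced Subtype.val
    -- (c) the remainder has a basis of clopen sets (is zero-dimensional)
    (∃ B : Set (Set ↥S), (∀ b ∈ B, @IsClopen ↥S τ b) ∧
        @TopologicalSpace.IsTopologicalBasis ↥S τ B) ∧
    -- (d) every subset of the remainder closed in `n-σX` is compact
    (∀ K : Set (nKatetov X n), K ⊆ S → IsClosed[σ] K → @IsCompact _ σ K) ∧
    -- (e) every closed nowhere dense subset of `X` is closed in `n-σX`
    (∀ A : Set X, IsClosed A → interior (closure A) = (∅ : Set X) →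
      IsClosed[σ] (Sum.inl '' A)) := by
  intro σ S τ
  refine ⟨⟨_, ?_, nKatetov.isTopologicalBasis_basicOpen.induced Subtype.val⟩,
    fun K hKS hK => nKatetov.isCompact_of_isClosed_subset_remainder hn hKS hK,
    fun A hA hAd => nKatetov.isClosed_inl_image hA (hA.closure_eq ▸ hAd)⟩
  rintro _ ⟨_, ⟨W, hW, rfl⟩, rfl⟩
  exact nKatetov.isClopen_preimage_val_basicOpen hW

theorem stmt18 {X : Type u} [TopologicalSpace X] (n : ℕ) (hn : 2 ≤ n)
    (hX : NHausdorff X n) :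
    let σ : TopologicalSpace (nKatetov X n) :=
      @strictTop (nKatetov X n) (nKatetovTop X n) (Set.range Sum.inl)
    let S : Set (nKatetov X n) := (Set.range (Sum.inl : X → nKatetov X n))ᶜ
    let τ : TopologicalSpace ↥S := σ.induced Subtype.val
    -- (c) the remainder has a basis of clopen sets (is zero-dimensional)
    (∃ B : Set (Set ↥S), (∀ b ∈ B, @IsClopen ↥S τ b) ∧
        @TopologicalSpace.IsTopologicalBasis ↥S τ B) ∧
    -- (d) every subset of the remainder closed in `n-σX` is compact
    (∀ K : Set (nKatetov X n), K ⊆ S → IsClosed[σ] K → @IsCompact _ σ K) ∧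
    -- (e) every closed nowhere dense subset of `X` is closed in `n-σX`
    (∀ A : Set X, IsClosed A → interior (closure A) = (∅ : Set X) →
      IsClosed[σ] (Sum.inl '' A)) :=
  stmt18_general n hn
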